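/- For any combinatorial game G that has at least one Left option and at least one Right option, and any game H whose normal-play outcome is a second-player win (H ∈ 𝓟⁺), the ordinal sum G:H is misère-equivalent to G, i.e. for every game X, the misère outcome of G:H + X equals the misère outcome of G + X. -/

import Mathlib

/-! Mathlib no longer contains `SetTheory.PGame`, `nim`, `star`, `Subsequent` or `Nimber`;
they are re-declared here with their definitions from Mathlib of December 2024. -/

universe v

namespace SetTheory

inductive PGame : Type (v + 1)
  | mk : ∀ α β : Type v, (α → PGame) → (β → PGame) → PGame

namespace PGame

def LeftMoves : PGame → Type v
  | mk l _ _ _ => l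

def RightMoves : PGame → Type v
  | mk _ r _ _ => r

def moveLeft : ∀ g : PGame, LeftMoves g → PGame
  | mk _l _ L _ => L

def moveRight : ∀ g : PGame, RightMoves g → PGame
  | mk _ _r _ R => R

inductive IsOption : PGame.{v} → PGame.{v} → Prop
  | moveLeft {x : PGame} (i : x.LeftMoves) : IsOption (x.moveLeft i) x
  | moveRight {x : PGame} (i : x.RightMoves) : IsOption (x.moveRight i) x

theorem wf_isOption : WellFounded IsOption.{v} :=
  ⟨fun x => by
    induction x with
    | mk l r L R IHl IHr =>
      refine ⟨_, fun y h => ?_⟩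
      cases h with
      | moveLeft i => exact IHl i
      | moveRight j => exact IHr j⟩

def Subsequent : PGame.{v} → PGame.{v} → Prop :=
  Relation.TransGen IsOption

theorem wf_subsequent : WellFounded Subsequent.{v} :=
  wf_isOption.transGen

instance : WellFoundedRelation PGame.{v} :=
  ⟨_, wf_subsequent⟩

theorem Subsequent.moveLeft {x : PGame.{v}} (i : x.LeftMoves) : Subsequent (x.moveLeft i) x :=
  Relation.TransGen.single (IsOption.moveLeft i)

theorem Subsequent.moveRight {x : PGame.{v}} (j : x.RightMoves) :
    Subsequent (x.moveRight j) x :=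
  Relation.TransGen.single (IsOption.moveRight j)

instance : Zero PGame.{v} :=
  ⟨⟨PEmpty, PEmpty, PEmpty.elim, PEmpty.elim⟩⟩

def leLF : PGame.{v} → PGame.{v} → Prop × Prop
  | x, y =>
    ((∀ i, (leLF (x.moveLeft i) y).2) ∧ ∀ j, (leLF x (y.moveRight j)).2,
      (∃ i, (leLF x (y.moveLeft i)).1) ∨ ∃ j, (leLF (x.moveRight j) y).1)
termination_by x y => (x, y)
decreasing_by
  all_goals first
    | exact Prod.Lex.left _ _ (Subsequent.moveLeft _)
    | exact Prod.Lex.left _ _ (Subsequent.moveRight _)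
    | exact Prod.Lex.right _ (Subsequent.moveLeft _)
    | exact Prod.Lex.right _ (Subsequent.moveRight _)

instance : LE PGame.{v} :=
  ⟨fun x y => (leLF x y).1⟩

instance : LT PGame.{v} :=
  ⟨fun x y => x ≤ y ∧ ¬ y ≤ x⟩

def neg : PGame.{v} → PGame.{v}
  | ⟨l, r, L, R⟩ => ⟨r, l, fun i => neg (R i), fun i => neg (L i)⟩

instance : Neg PGame.{v} :=
  ⟨neg⟩

def add : PGame.{v} → PGame.{v} → PGame.{v}
  | x, y =>
    ⟨x.LeftMoves ⊕ y.LeftMoves, x.RightMoves ⊕ y.RightMoves,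
      Sum.elim (fun i => add (x.moveLeft i) y) (fun i => add x (y.moveLeft i)),
      Sum.elim (fun j => add (x.moveRight j) y) (fun j => add x (y.moveRight j))⟩
termination_by x y => (x, y)
decreasing_by
  all_goals first
    | exact Prod.Lex.left _ _ (Subsequent.moveLeft _)
    | exact Prod.Lex.left _ _ (Subsequent.moveRight _)
    | exact Prod.Lex.right _ (Subsequent.moveLeft _)
    | exact Prod.Lex.right _ (Subsequent.moveRight _)

instance : Add PGame.{v} :=
  ⟨add⟩

instance : Sub PGame.{v} :=
  ⟨fun x y => x + -y⟩

def star : PGame.{v} :=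
  ⟨PUnit, PUnit, fun _ => 0, fun _ => 0⟩

noncomputable def nim (o : Ordinal.{v}) : PGame.{v} :=
  ⟨o.ToType, o.ToType,
    fun x => nim (Ordinal.ToType.mk.symm x).val,
    fun x => nim (Ordinal.ToType.mk.symm x).val⟩
termination_by o
decreasing_by all_goals exact (Ordinal.ToType.mk.symm x).prop

end PGame

end SetTheory

def Nimber : Type (v + 1) :=
  Ordinal.{v}

noncomputable instance : ConditionallyCompleteLinearOrderBot Nimber.{v} :=
  inferInstanceAs (ConditionallyCompleteLinearOrderBot Ordinal.{v})

instance : One Nimber.{v} :=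
  inferInstanceAs (One Ordinal.{v})

open SetTheory PGame

universe u

/-- The four outcome classes of a combinatorial game. -/
inductive Outcome : Type
  | L | N | P | R
deriving DecidableEq

/-- The partial order on outcomes: `R` least, `L` greatest, `N` and `P` incomparable. -/
def Outcome.leB : Outcome → Outcome → Bool
  | .R, _ => true
  | _, .L => true
  | .N, .N => true
  | .P, .P => true
  | _, _ => false

instance : PartialOrder Outcome where
  le a b := Outcome.leB a b = true
  le_refl a := by cases a <;> rfl
  le_trans a b c := by cases a <;> cases b <;> cases c <;> simp [Outcome.leB]
  le_antisymm a b := by cases a <;> cases b <;> simp [Outcome.leB]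

/-- `misereWins true G` : Left, moving first, wins `G` under misère play;
`misereWins false G` : Right, moving first, wins `G` under misère play.
(Under misère play, a player who cannot move wins.) -/
def misereWins : Bool → SetTheory.PGame.{u} → Prop
  | true, G => IsEmpty G.LeftMoves ∨ ∃ i, ¬ misereWins false (G.moveLeft i)
  | false, G => IsEmpty G.RightMoves ∨ ∃ j, ¬ misereWins true (G.moveRight j)
termination_by _ G => G
decreasing_by
  all_goals first
    | exact Subsequent.moveLeft _
    | exact Subsequent.moveRight _

/-- Build an outcome class from the propositions "Left moving first wins" and
"Right moving first wins". -/
noncomputable def outcomeOf (LF RF : Prop) : Outcome := by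
  classical exact if LF then (if RF then .N else .L) else (if RF then .R else .P)

/-- The normal-play outcome `o⁺(G)` of a game. -/
noncomputable def normalOutcome (G : PGame) : Outcome :=
  outcomeOf (¬ G ≤ 0) (¬ 0 ≤ G)

/-- The misère-play outcome `o⁻(G)` of a game. -/
noncomputable def misereOutcome (G : PGame) : Outcome :=
  outcomeOf (misereWins true G) (misereWins false G)

/-- The ordinal sum `G : H` of two games: either move in `G` (destroying the `H` part),
or move in `H` keeping the base `G`. -/
def ordinalSum (G : PGame.{u}) : PGame.{u} → PGame.{u}
  | H => PGame.mk (G.LeftMoves ⊕ H.LeftMoves) (G.RightMoves ⊕ H.RightMoves)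
      (Sum.elim G.moveLeft fun i => ordinalSum G (H.moveLeft i))
      (Sum.elim G.moveRight fun j => ordinalSum G (H.moveRight j))
termination_by H => H
decreasing_by
  all_goals first
    | exact Subsequent.moveLeft _
    | exact Subsequent.moveRight _

/-- The game `↑` (up) `= {0 | *}`. -/
def up : PGame.{u} := ⟨PUnit, PUnit, fun _ => 0, fun _ => star⟩

/-- `n` copies of `↑` added together. -/
def nUp : ℕ → PGame.{u}
  | 0 => 0
  | n + 1 => nUp n + up

/-- The integer multiple `w·↑`. -/
def upMul : ℤ → PGame.{u}
  | .ofNat k => nUp k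
  | .negSucc k => -(nUp (k + 1))

/-- Finite disjunctive sum of a family of games. -/
def psum : {k : ℕ} → (Fin k → PGame.{u}) → PGame.{u}
  | 0, _ => 0
  | k + 1, f => psum (fun i : Fin k => f i.castSucc) + f (Fin.last k)

/-- The superstar `{*x₁, …, *xₙ}`: the impartial game whose Left and Right options are
exactly the nimbers `*xᵢ`. -/
noncomputable def superstar {n : ℕ} (x : Fin n → ℕ) : PGame :=
  ⟨Fin n, Fin n, fun i => nim (x i), fun i => nim (x i)⟩

/-- The minimum excludant of a set of naturals. -/
noncomputable def setMex (S : Set ℕ) : ℕ := sInf {n | n ∉ S}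

/-- Iterated XOR (nim-sum) of a finite family of naturals. -/
def xorSum : {k : ℕ} → (Fin k → ℕ) → ℕ
  | 0, _ => 0
  | k + 1, f => xorSum (fun i : Fin k => f i.castSucc) ^^^ f (Fin.last k)

/-- A set of naturals is star-closed if it is closed under XOR with 1. -/
def StarClosedN (S : Set ℕ) : Prop := ∀ a ∈ S, a ^^^ 1 ∈ S

/-- `G` is all-small (dicotic): in every subposition, either both players can move
or neither can. -/
def AllSmall (G : PGame) : Prop :=
  (Nonempty G.LeftMoves ↔ Nonempty G.RightMoves) ∧
    ∀ p, Subsequent p G → (Nonempty p.LeftMoves ↔ Nonempty p.RightMoves)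

/-- `G` has (integer) atomic weight `w`, via the remote-star characterization:
for all sufficiently remote `N`, `*N + ↓ < G - w·↑ < *N + ↑`. -/
def HasIntAtomicWeight (G : PGame) (w : ℤ) : Prop :=
  ∃ N₀ : ℕ, ∀ N : ℕ, N₀ ≤ N →
    nim N + (-up) < G - upMul w ∧ G - upMul w < nim N + up

open Classical in
/-- The misère Grundy value of an (impartial) game: the mex of the misère Grundy values
of its options, except that the empty game has misère Grundy value `1`. -/
noncomputable def misereGrundy : PGame.{u} → Nimber.{u}
  | G =>
    if IsEmpty G.LeftMoves then 1
    else sInf (Set.range fun i => misereGrundy (G.moveLeft i))ᶜ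
termination_by G => G
decreasing_by
  all_goals first
    | exact Subsequent.moveLeft _
    | exact Subsequent.moveRight _

/-- A set of games closed under disjunctive sum and under taking subpositions. -/
def SClosed (A : Set PGame) : Prop :=
  (∀ G ∈ A, ∀ H ∈ A, G + H ∈ A) ∧ ∀ G ∈ A, ∀ G', Subsequent G' G → G' ∈ A

/-- `K` is an evil kernel of `A`: setting `G* = G` for `G ∈ K` and `G* = G + *` otherwise,
one has `o⁺(G) = o⁻(G*)` and `o⁻(G) = o⁺(G*)` for all `G ∈ A`. -/
def IsEvilKernel (A K : Set PGame) : Prop :=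
  K ⊆ A ∧ ∀ G ∈ A,
    (G ∈ K → normalOutcome G = misereOutcome G ∧ misereOutcome G = normalOutcome G) ∧
    (G ∉ K → normalOutcome G = misereOutcome (G + star) ∧
      misereOutcome G = normalOutcome (G + star))

/-- `(A, K)` is evilly normal: `A` is closed, `K` is an evil kernel of `A`, and
`G + H ∉ K ↔ (G ∉ K ∧ H ∉ K)` for all `G, H ∈ A`. -/
def EvillyNormal (A K : Set PGame) : Prop :=
  SClosed A ∧ IsEvilKernel A K ∧ ∀ G ∈ A, ∀ H ∈ A, (G + H ∉ K ↔ G ∉ K ∧ H ∉ K)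

/-- Normal-play equality of games: `G` and `H` have the same normal-play outcome in
every sum. -/
def NormalEq (G H : PGame) : Prop := ∀ X, normalOutcome (G + X) = normalOutcome (H + X)

theorem add_eq_mk (x y : PGame.{u}) : x + y = PGame.mk (x.LeftMoves ⊕ y.LeftMoves)
      (x.RightMoves ⊕ y.RightMoves)
      (Sum.elim (fun i => x.moveLeft i + y) (fun i => x + y.moveLeft i))
      (Sum.elim (fun j => x.moveRight j + y) (fun j => x + y.moveRight j)) := by
  exact add.eq_1 x y

def toLeftMovesAdd {x y : PGame.{u}} : x.LeftMoves ⊕ y.LeftMoves ≃ (x + y).LeftMoves :=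
  Equiv.cast (congrArg LeftMoves (add_eq_mk x y)).symm

def toRightMovesAdd {x y : PGame.{u}} : x.RightMoves ⊕ y.RightMoves ≃ (x + y).RightMoves :=
  Equiv.cast (congrArg RightMoves (add_eq_mk x y)).symm

theorem moveLeft_cast' {g g' : PGame.{u}} (e : g = g') (i : g'.LeftMoves) :
    g.moveLeft (cast (congrArg LeftMoves e).symm i) = g'.moveLeft i := by
  subst e; rfl

theorem moveRight_cast' {g g' : PGame.{u}} (e : g = g') (i : g'.RightMoves) :
    g.moveRight (cast (congrArg RightMoves e).symm i) = g'.moveRight i := by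
  subst e; rfl

theorem add_moveLeft_inl {x y : PGame.{u}} (i : x.LeftMoves) :
    (x + y).moveLeft (toLeftMovesAdd (Sum.inl i)) = x.moveLeft i + y :=
  moveLeft_cast' (add_eq_mk x y) (Sum.inl i)

theorem add_moveLeft_inr {x y : PGame.{u}} (i : y.LeftMoves) :
    (x + y).moveLeft (toLeftMovesAdd (Sum.inr i)) = x + y.moveLeft i :=
  moveLeft_cast' (add_eq_mk x y) (Sum.inr i)

theorem add_moveRight_inl {x y : PGame.{u}} (i : x.RightMoves) :
    (x + y).moveRight (toRightMovesAdd (Sum.inl i)) = x.moveRight i + y :=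
  moveRight_cast' (add_eq_mk x y) (Sum.inl i)

theorem add_moveRight_inr {x y : PGame.{u}} (i : y.RightMoves) :
    (x + y).moveRight (toRightMovesAdd (Sum.inr i)) = x + y.moveRight i :=
  moveRight_cast' (add_eq_mk x y) (Sum.inr i)

theorem leftMoves_add_cases {x y : PGame.{u}} (k : (x + y).LeftMoves)
    {P : (x + y).LeftMoves → Prop}
    (hl : ∀ i, P (toLeftMovesAdd (Sum.inl i))) (hr : ∀ i, P (toLeftMovesAdd (Sum.inr i))) :
    P k := by
  rw [← toLeftMovesAdd.apply_symm_apply k]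
  cases toLeftMovesAdd.symm k with
  | inl i => exact hl i
  | inr i => exact hr i

theorem rightMoves_add_cases {x y : PGame.{u}} (k : (x + y).RightMoves)
    {P : (x + y).RightMoves → Prop}
    (hl : ∀ i, P (toRightMovesAdd (Sum.inl i))) (hr : ∀ i, P (toRightMovesAdd (Sum.inr i))) :
    P k := by
  rw [← toRightMovesAdd.apply_symm_apply k]
  cases toRightMovesAdd.symm k with
  | inl i => exact hl i
  | inr i => exact hr i

namespace SetTheory.PGame

theorem zero_le {x : PGame.{u}} : 0 ≤ x ↔ ∀ j, ∃ i, 0 ≤ (x.moveRight j).moveLeft i := by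
  show (leLF 0 x).1 ↔ _
  rw [leLF.eq_1]
  dsimp only
  constructor
  · rintro ⟨-, h⟩ j
    have h := h j
    rw [leLF.eq_1] at h
    rcases h with ⟨i, hi⟩ | ⟨j', -⟩
    · exact ⟨i, hi⟩
    · exact PEmpty.elim j'
  · intro h
    refine ⟨fun i => PEmpty.elim i, fun j => ?_⟩
    rw [leLF.eq_1]
    obtain ⟨i, hi⟩ := h j
    exact Or.inl ⟨i, hi⟩

theorem le_zero {x : PGame.{u}} : x ≤ 0 ↔ ∀ i, ∃ j, (x.moveLeft i).moveRight j ≤ 0 := by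
  show (leLF x 0).1 ↔ _
  rw [leLF.eq_1]
  dsimp only
  constructor
  · rintro ⟨h, -⟩ i
    have h := h i
    rw [leLF.eq_1] at h
    rcases h with ⟨i', -⟩ | ⟨j, hj⟩
    · exact PEmpty.elim i'
    · exact ⟨j, hj⟩
  · intro h
    refine ⟨fun i => ?_, fun j => PEmpty.elim j⟩
    rw [leLF.eq_1]
    obtain ⟨j, hj⟩ := h i
    exact Or.inr ⟨j, hj⟩

end SetTheory.PGame

private theorem misereWins_true_iff (G : PGame) :
    misereWins true G ↔ IsEmpty G.LeftMoves ∨ ∃ i, ¬ misereWins false (G.moveLeft i) := by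
  rw [misereWins]

private theorem misereWins_false_iff (G : PGame) :
    misereWins false G ↔ IsEmpty G.RightMoves ∨ ∃ j, ¬ misereWins true (G.moveRight j) := by
  rw [misereWins]

private theorem ordinalSum_def (G H : PGame.{u}) :
    ordinalSum G H = PGame.mk.{u} (G.LeftMoves ⊕ H.LeftMoves) (G.RightMoves ⊕ H.RightMoves)
      (Sum.elim G.moveLeft fun i => ordinalSum G (H.moveLeft i))
      (Sum.elim G.moveRight fun j => ordinalSum G (H.moveRight j)) := by
  rw [ordinalSum]

private theorem claimA (G : PGame) (hL : Nonempty G.LeftMoves) (hR : Nonempty G.RightMoves)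
    (H X : PGame) (h0 : 0 ≤ H) :
    (misereWins true (G + X) → misereWins true (ordinalSum G H + X)) ∧
    (¬ misereWins false (G + X) → ¬ misereWins false (ordinalSum G H + X)) := by
  constructor
  · intro hw
    rw [misereWins_true_iff] at hw
    rw [ordinalSum_def, misereWins_true_iff]
    rcases hw with he | ⟨i, hi⟩
    · exact (he.false (toLeftMovesAdd (Sum.inl (Classical.choice hL)))).elim
    · right
      revert hi
      induction i using leftMoves_add_cases with
      | hl i =>
        intro hi
        rw [add_moveLeft_inl] at hi
        exact ⟨toLeftMovesAdd (Sum.inl (Sum.inl i)), by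
          erw [add_moveLeft_inl]; exact hi⟩
      | hr a =>
        intro hi
        rw [add_moveLeft_inr] at hi
        refine ⟨toLeftMovesAdd (Sum.inr a), ?_⟩
        rw [add_moveLeft_inr, ← ordinalSum_def]
        exact (claimA G hL hR H (X.moveLeft a) h0).2 hi
  · intro hw hcon
    have hw' := hw
    rw [misereWins_false_iff] at hw
    push_neg at hw
    obtain ⟨hne, hall⟩ := hw
    rw [ordinalSum_def, misereWins_false_iff] at hcon
    rcases hcon with he | ⟨j, hj⟩
    · exact he.false (toRightMovesAdd (Sum.inl (Sum.inl (Classical.choice hR))))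
    · revert hj
      induction j using rightMoves_add_cases with
      | hl jt =>
        rintro hj
        obtain j | t := jt
        · erw [add_moveRight_inl] at hj
          have := hall (toRightMovesAdd (Sum.inl j))
          rw [add_moveRight_inl] at this
          exact hj this
        · erw [add_moveRight_inl] at hj
          apply hj
          show misereWins true (ordinalSum G (H.moveRight t) + X)
          obtain ⟨l, hl⟩ := zero_le.1 h0 t
          rw [ordinalSum_def, misereWins_true_iff]
          right
          refine ⟨toLeftMovesAdd (Sum.inl (Sum.inr l)), ?_⟩
          erw [add_moveLeft_inl]
          show ¬ misereWins false (ordinalSum G ((H.moveRight t).moveLeft l) + X)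
          exact (claimA G hL hR ((H.moveRight t).moveLeft l) X hl).2 hw'
      | hr b =>
        intro hj
        rw [add_moveRight_inr] at hj
        apply hj
        rw [← ordinalSum_def]
        apply (claimA G hL hR H (X.moveRight b) h0).1
        have := hall (toRightMovesAdd (Sum.inr b))
        rw [add_moveRight_inr] at this
        exact this
termination_by (H, X)
decreasing_by
  all_goals first
    | exact Prod.Lex.right _ (Subsequent.moveLeft _)
    | exact Prod.Lex.right _ (Subsequent.moveRight _)
    | exact Prod.Lex.left _ _ (Relation.TransGen.head (IsOption.moveLeft _) (Subsequent.moveRight _))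
    | exact Prod.Lex.left _ _ (Relation.TransGen.head (IsOption.moveRight _) (Subsequent.moveLeft _))

private theorem claimB (G : PGame) (hL : Nonempty G.LeftMoves) (hR : Nonempty G.RightMoves)
    (H X : PGame) (h0 : H ≤ 0) :
    (misereWins false (G + X) → misereWins false (ordinalSum G H + X)) ∧
    (¬ misereWins true (G + X) → ¬ misereWins true (ordinalSum G H + X)) := by
  constructor
  · intro hw
    rw [misereWins_false_iff] at hw
    rw [ordinalSum_def, misereWins_false_iff]
    rcases hw with he | ⟨j, hj⟩
    · exact (he.false (toRightMovesAdd (Sum.inl (Classical.choice hR)))).elim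
    · right
      revert hj
      induction j using rightMoves_add_cases with
      | hl j =>
        intro hj
        rw [add_moveRight_inl] at hj
        exact ⟨toRightMovesAdd (Sum.inl (Sum.inl j)), by
          erw [add_moveRight_inl]; exact hj⟩
      | hr b =>
        intro hj
        rw [add_moveRight_inr] at hj
        refine ⟨toRightMovesAdd (Sum.inr b), ?_⟩
        rw [add_moveRight_inr, ← ordinalSum_def]
        exact (claimB G hL hR H (X.moveRight b) h0).2 hj
  · intro hw hcon
    have hw' := hw
    rw [misereWins_true_iff] at hw
    push_neg at hw
    obtain ⟨hne, hall⟩ := hw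
    rw [ordinalSum_def, misereWins_true_iff] at hcon
    rcases hcon with he | ⟨i, hi⟩
    · exact he.false (toLeftMovesAdd (Sum.inl (Sum.inl (Classical.choice hL))))
    · revert hi
      induction i using leftMoves_add_cases with
      | hl it =>
        rintro hi
        obtain i | t := it
        · erw [add_moveLeft_inl] at hi
          have := hall (toLeftMovesAdd (Sum.inl i))
          rw [add_moveLeft_inl] at this
          exact hi this
        · erw [add_moveLeft_inl] at hi
          apply hi
          show misereWins false (ordinalSum G (H.moveLeft t) + X)
          obtain ⟨l, hl⟩ := le_zero.1 h0 t
          rw [ordinalSum_def, misereWins_false_iff]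
          right
          refine ⟨toRightMovesAdd (Sum.inl (Sum.inr l)), ?_⟩
          erw [add_moveRight_inl]
          show ¬ misereWins true (ordinalSum G ((H.moveLeft t).moveRight l) + X)
          exact (claimB G hL hR ((H.moveLeft t).moveRight l) X hl).2 hw'
      | hr a =>
        intro hi
        rw [add_moveLeft_inr] at hi
        apply hi
        rw [← ordinalSum_def]
        apply (claimB G hL hR H (X.moveLeft a) h0).1
        have := hall (toLeftMovesAdd (Sum.inr a))
        rw [add_moveLeft_inr] at this
        exact this
termination_by (H, X)
decreasing_by
  all_goals first
    | exact Prod.Lex.right _ (Subsequent.moveLeft _)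
    | exact Prod.Lex.right _ (Subsequent.moveRight _)
    | exact Prod.Lex.left _ _ (Relation.TransGen.head (IsOption.moveLeft _) (Subsequent.moveRight _))
    | exact Prod.Lex.left _ _ (Relation.TransGen.head (IsOption.moveRight _) (Subsequent.moveLeft _))

/-- If `G` has at least one Left and one Right option and
`o⁺(H) = 𝓟`, then `G:H` is misère-equivalent to `G`: for every game `X`,
`o⁻(G:H + X) = o⁻(G + X)`. -/
theorem ordinalSum_misere_equiv (G H : PGame)
    (hL : Nonempty G.LeftMoves) (hR : Nonempty G.RightMoves)
    (hH : normalOutcome H = Outcome.P) :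
    ∀ X : PGame, misereOutcome (ordinalSum G H + X) = misereOutcome (G + X) := by
  intro X
  have hle : H ≤ 0 ∧ 0 ≤ H := by
    by_cases hA : H ≤ 0 <;> by_cases hB : 0 ≤ H
    · exact ⟨hA, hB⟩
    all_goals simp [normalOutcome, outcomeOf, hA, hB] at hH
  have i1 : misereWins true (ordinalSum G H + X) ↔ misereWins true (G + X) := by
    constructor
    · intro h
      by_contra hc
      exact (claimB G hL hR H X hle.1).2 hc h
    · exact (claimA G hL hR H X hle.2).1
  have i2 : misereWins false (ordinalSum G H + X) ↔ misereWins false (G + X) := by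
    constructor
    · intro h
      by_contra hc
      exact (claimA G hL hR H X hle.2).2 hc h
    · exact (claimB G hL hR H X hle.1).1
  simp only [misereOutcome]
  rw [propext i1, propext i2]
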